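/- arXiv:2011.12780 — 3 statements merged into one kernel-verified Lean document; each statement's English description precedes it below -/
import Mathlib

section
/- Let b > 0, γ ≥ 0, k ≥ 1 an integer, and let φ : [0,T] → [0,∞) be absolutely continuous with φ'(t) ≤ -b·φ(t)^k + γ^k for almost every t ∈ [0,T]. Then for all t ∈ [0,T], φ(t) ≤ φ(0) + (2/b)^{1/k} · γ. -/
/-!
Above the level `(2/b)^{1/k} γ` the right-hand side `-b φ^k + γ^k` is at most `-γ^k ≤ 0`.
Since `φ(0) ≥ 0`, the bound `M = φ(0) + (2/b)^{1/k} γ` lies above that level, so `φ` is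
nonincreasing wherever `φ > M`.
If `φ(t) > M`, take the last time `s ≤ t` with `φ(s) ≤ M`; integrating `φ' ≤ 0` over
`(s, t]` gives `φ(t) ≤ φ(s) ≤ M`.
-/

open MeasureTheory Set

lemma continuousOn_of_sub_eq_integral {φ φ' : ℝ → ℝ} {a t : ℝ} (hat : a ≤ t)
    (hint : IntervalIntegrable φ' volume a t)
    (hftc : ∀ u ∈ Icc a t, φ u - φ a = ∫ s in a..u, φ' s) :
    ContinuousOn φ (Icc a t) := by
  have hprim := intervalIntegral.continuousOn_primitive_interval' hint left_mem_uIcc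
  rw [uIcc_of_le hat] at hprim
  exact ((continuousOn_const (c := φ a)).add hprim).congr fun u hu => by
    simp only [Pi.add_apply]; linarith [hftc u hu]

lemma le_of_integral_deriv_nonpos_above {φ φ' : ℝ → ℝ} {a t M : ℝ} (hat : a ≤ t)
    (hint : IntervalIntegrable φ' volume a t)
    (hftc : ∀ u ∈ Icc a t, φ u - φ a = ∫ s in a..u, φ' s)
    (hφ' : ∀ᵐ u ∂volume.restrict (Ioc a t), M < φ u → φ' u ≤ 0)
    (ha : φ a ≤ M) : φ t ≤ M := by
  set S : Set ℝ := Icc a t ∩ φ ⁻¹' Iic M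
  have hS : IsCompact S :=
    isCompact_Icc.of_isClosed_subset
      ((continuousOn_of_sub_eq_integral hat hint hftc).preimage_isClosed_of_isClosed
        isClosed_Icc isClosed_Iic) inter_subset_left
  have hsS : sSup S ∈ S := hS.sSup_mem ⟨a, ⟨left_mem_Icc.2 hat, ha⟩⟩
  set s := sSup S
  obtain ⟨⟨has, hst⟩, hφs : φ s ≤ M⟩ := hsS
  have above : ∀ u ∈ Ioc s t, M < φ u := fun u hu => by
    by_contra! hle
    exact hu.1.not_ge (le_csSup hS.bddAbove ⟨⟨has.trans hu.1.le, hu.2⟩, hle⟩)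
  have hint_s : IntervalIntegrable φ' volume a s :=
    hint.mono_set (uIcc_subset_uIcc_left (by rw [uIcc_of_le hat]; exact ⟨has, hst⟩))
  have hdiff : φ t - φ s = ∫ u in s..t, φ' u := by
    rw [← intervalIntegral.integral_interval_sub_left hint hint_s]
    linarith [hftc t (right_mem_Icc.2 hat), hftc s ⟨has, hst⟩]
  have hnonpos : ∫ u in s..t, φ' u ≤ 0 := by
    rw [intervalIntegral.integral_of_le hst]
    refine integral_nonpos_of_ae ?_
    filter_upwards [ae_restrict_of_ae_restrict_of_subset (Ioc_subset_Ioc_left has) hφ',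
      ae_restrict_mem measurableSet_Ioc] with u hu hmem
    exact hu (above u hmem)
  linarith

lemma neg_mul_pow_add_pow_nonpos {b γ x : ℝ} {k : ℕ} (hb : 0 < b) (hγ : 0 ≤ γ) (hk : k ≠ 0)
    (hx : (2 / b) ^ ((1 : ℝ) / k) * γ ≤ x) : -b * x ^ k + γ ^ k ≤ 0 := by
  have hc : ((2 / b) ^ ((1 : ℝ) / k)) ^ k = 2 / b := by
    rw [one_div, Real.rpow_inv_natCast_pow (by positivity) hk]
  have hpow : 2 / b * γ ^ k ≤ x ^ k := by
    simpa only [mul_pow, hc] using pow_le_pow_left₀ (by positivity) hx k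
  have hbx : 2 * γ ^ k ≤ b * x ^ k := by
    calc 2 * γ ^ k = b * (2 / b * γ ^ k) := by field_simp
      _ ≤ b * x ^ k := mul_le_mul_of_nonneg_left hpow hb.le
  nlinarith [pow_nonneg hγ k]

theorem stmt_3_general (T b γ : ℝ) (k : ℕ) (hb : 0 < b) (hγ : 0 ≤ γ) (hk : 1 ≤ k)
    (φ φ' : ℝ → ℝ)
    (hpos : ∀ t ∈ Set.Icc (0:ℝ) T, 0 ≤ φ t)
    (hint : IntervalIntegrable φ' volume 0 T)
    (hderiv : ∀ᵐ t ∂(volume.restrict (Set.Ioc (0:ℝ) T)),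
      HasDerivAt φ (φ' t) t ∧ φ' t ≤ -b * φ t ^ k + γ ^ k)
    (hftc : ∀ t ∈ Set.Icc (0:ℝ) T, φ t - φ 0 = ∫ s in (0:ℝ)..t, φ' s) :
    ∀ t ∈ Set.Icc (0:ℝ) T, φ t ≤ φ 0 + (2 / b) ^ ((1:ℝ)/k) * γ := by
  intro t ⟨ht0, htT⟩
  have hφ0 : 0 ≤ φ 0 := hpos 0 ⟨le_rfl, ht0.trans htT⟩
  have hc : 0 ≤ (2 / b) ^ ((1:ℝ)/k) * γ := by positivity
  refine le_of_integral_deriv_nonpos_above ht0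
    (hint.mono_set (uIcc_subset_uIcc_left (by rw [uIcc_of_le (ht0.trans htT)]; exact ⟨ht0, htT⟩)))
    (fun u hu => hftc u ⟨hu.1, hu.2.trans htT⟩) ?_ (by linarith)
  filter_upwards [ae_restrict_of_ae_restrict_of_subset (Ioc_subset_Ioc_right htT) hderiv]
    with u hu hMu
  exact hu.2.trans (neg_mul_pow_add_pow_nonpos hb hγ (by omega) (by linarith))

/-- If φ : [0,T] → [0,∞) is absolutely continuous with
φ'(t) ≤ -b·φ(t)^k + γ^k a.e., then φ(t) ≤ φ(0) + (2/b)^{1/k}·γ. -/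
theorem stmt_3 (T b γ : ℝ) (k : ℕ) (hT : 0 < T) (hb : 0 < b) (hγ : 0 ≤ γ) (hk : 1 ≤ k)
    (φ φ' : ℝ → ℝ)
    (hpos : ∀ t ∈ Set.Icc (0:ℝ) T, 0 ≤ φ t)
    (hint : IntervalIntegrable φ' volume 0 T)
    (hderiv : ∀ᵐ t ∂(volume.restrict (Set.Ioc (0:ℝ) T)),
      HasDerivAt φ (φ' t) t ∧ φ' t ≤ -b * φ t ^ k + γ ^ k)
    (hftc : ∀ t ∈ Set.Icc (0:ℝ) T, φ t - φ 0 = ∫ s in (0:ℝ)..t, φ' s) :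
    ∀ t ∈ Set.Icc (0:ℝ) T, φ t ≤ φ 0 + (2 / b) ^ ((1:ℝ)/k) * γ :=
  stmt_3_general T b γ k hb hγ hk φ φ' hpos hint hderiv hftc
end

section
/- Let f : ℝ → ℝ be a polynomial of odd degree 2k+1 of the form f(η) = -a·η^{2k+1} + Σ_{l=0}^{2k} a_l·η^l with a ≥ c > 0 and |a_l| ≤ C for all l. Then there exists a constant a' ≥ 0, depending only on c, C, and k, such that f(η + ζ)·sgn(η) ≤ a'·(1 + |ζ|^{2k+1}) for all η, ζ ∈ ℝ. -/
/-!
Put `x = η + ζ` and `n = 2k + 1`. The lower-order part is `O((1 + |x|)^(2k))`, which is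
absorbed by `c |x|^n` up to a constant depending only on `c`, `C`, `k`. For `η > 0` the leading
term `-a x^n` is at most `-c |x|^n` when `x ≥ 0`, while for `x < 0` we have `|x| ≤ |ζ|` and
it is at most `C |ζ|^n`. The case `η < 0` follows by replacing `(η, ζ)` with `(-η, -ζ)`, since
`n` is odd.
-/

open Finset

lemma abs_sum_range_mul_pow_le {m : ℕ} {B x : ℝ} {b : ℕ → ℝ} (hb : ∀ l ≤ m, |b l| ≤ B) :
    |∑ l ∈ range (m + 1), b l * x ^ l| ≤ B * (m + 1) * (1 + |x|) ^ m := by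
  have hB : 0 ≤ B := (abs_nonneg _).trans (hb 0 m.zero_le)
  have hx : 1 ≤ 1 + |x| := le_add_of_nonneg_right (abs_nonneg x)
  calc |∑ l ∈ range (m + 1), b l * x ^ l|
      ≤ ∑ l ∈ range (m + 1), |b l * x ^ l| := abs_sum_le_sum_abs _ _
    _ ≤ ∑ _l ∈ range (m + 1), B * (1 + |x|) ^ m := by
      refine sum_le_sum fun l hl => ?_
      have hlm : l ≤ m := Nat.lt_succ_iff.mp (mem_range.mp hl)
      rw [abs_mul, abs_pow]
      gcongr
      · exact hb l hlm
      · calc |x| ^ l ≤ (1 + |x|) ^ l := by gcongr; linarith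
          _ ≤ (1 + |x|) ^ m := pow_le_pow_right₀ hx hlm
    _ = B * (m + 1) * (1 + |x|) ^ m := by
      rw [sum_const, card_range, nsmul_eq_mul]; push_cast; ring

lemma exists_mul_one_add_pow_le (m : ℕ) {B c : ℝ} (hB : 0 ≤ B) (hc : 0 < c) :
    ∃ A, 0 ≤ A ∧ ∀ t, 0 ≤ t → B * (1 + t) ^ m ≤ c * t ^ (m + 1) + A := by
  set M := max 1 (2 ^ m * B / c)
  have hA : 0 ≤ B * (1 + M) ^ m := by positivity
  refine ⟨B * (1 + M) ^ m, hA, fun t ht => ?_⟩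
  rcases le_total t M with htM | hMt
  · calc B * (1 + t) ^ m ≤ B * (1 + M) ^ m := by gcongr
      _ ≤ c * t ^ (m + 1) + B * (1 + M) ^ m := le_add_of_nonneg_left (by positivity)
  · have ht1 : 1 ≤ t := (le_max_left _ _).trans hMt
    have hBt : 2 ^ m * B ≤ c * t := (div_le_iff₀' hc).mp ((le_max_right _ _).trans hMt)
    calc B * (1 + t) ^ m ≤ B * (2 * t) ^ m := by gcongr; linarith
      _ = 2 ^ m * B * t ^ m := by ring
      _ ≤ c * t * t ^ m := by gcongr
      _ = c * t ^ (m + 1) := by ring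
      _ ≤ c * t ^ (m + 1) + B * (1 + M) ^ m := le_add_of_nonneg_right hA

lemma neg_mul_pow_add_le {n : ℕ} (hn : Odd n) {a c C A η ζ P : ℝ} (hc : 0 ≤ c) (hca : c ≤ a)
    (haC : a ≤ C) (hη : 0 ≤ η) (hP : |P| ≤ c * |η + ζ| ^ n + A) :
    -(a * (η + ζ) ^ n) + P ≤ A + (C + c) * |ζ| ^ n := by
  have hζ : 0 ≤ |ζ| ^ n := by positivity
  have hP' := (le_abs_self P).trans hP
  rcases le_or_gt 0 (η + ζ) with hx | hx
  · rw [abs_of_nonneg hx] at hP'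
    have : c * (η + ζ) ^ n ≤ a * (η + ζ) ^ n := by gcongr
    nlinarith
  · have hxζ : |η + ζ| ^ n ≤ |ζ| ^ n := by
      refine pow_le_pow_left₀ (abs_nonneg _) ?_ n
      rw [abs_of_neg hx]
      linarith [neg_le_abs ζ]
    have hodd : (η + ζ) ^ n = -|η + ζ| ^ n := by
      rw [abs_of_neg hx, hn.neg_pow, neg_neg]
    rw [hodd]
    nlinarith [pow_nonneg (abs_nonneg (η + ζ)) n]

/-- For odd-degree polynomials f(η) = -a η^{2k+1} + Σ_{l≤2k} a_l η^l with
c ≤ a ≤ C and |a_l| ≤ C, there is a constant a' ≥ 0 depending only on c, C, k with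
f(η+ζ)·sgn η ≤ a'(1+|ζ|^{2k+1}) for all η, ζ. -/
theorem stmt_5 (k : ℕ) (c C : ℝ) (hc : 0 < c) (hcC : c ≤ C) :
    ∃ a' : ℝ, 0 ≤ a' ∧
      ∀ (a : ℝ) (acoef : ℕ → ℝ), c ≤ a → a ≤ C → (∀ l ≤ 2*k, |acoef l| ≤ C) →
        ∀ η ζ : ℝ,
          (-(a * (η + ζ) ^ (2*k+1)) + ∑ l ∈ Finset.range (2*k+1), acoef l * (η + ζ) ^ l)
              * Real.sign η ≤ a' * (1 + |ζ| ^ (2*k+1)) := by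
  have hC : 0 ≤ C := hc.le.trans hcC
  obtain ⟨A, hA0, hA⟩ :=
    exists_mul_one_add_pow_le (2 * k) (B := C * ((2 * k : ℕ) + 1)) (by positivity) hc
  refine ⟨A + (C + c), by positivity, fun a acoef hca haC hcoef η ζ => ?_⟩
  have hodd : Odd (2 * k + 1) := odd_two_mul_add_one k
  set P := ∑ l ∈ range (2 * k + 1), acoef l * (η + ζ) ^ l
  have hP : |P| ≤ c * |η + ζ| ^ (2 * k + 1) + A :=
    (abs_sum_range_mul_pow_le hcoef).trans (hA _ (abs_nonneg _))
  have hbound : A + (C + c) * |ζ| ^ (2 * k + 1) ≤ (A + (C + c)) * (1 + |ζ| ^ (2 * k + 1)) := by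
    nlinarith [pow_nonneg (abs_nonneg ζ) (2 * k + 1)]
  rcases lt_trichotomy η 0 with hη | rfl | hη
  · have hneg : -η + -ζ = -(η + ζ) := by ring
    have hP' : |-P| ≤ c * |-η + -ζ| ^ (2 * k + 1) + A := by
      rwa [abs_neg, hneg, abs_neg]
    have := neg_mul_pow_add_le hodd hc.le hca haC (neg_nonneg.mpr hη.le) hP'
    rw [hneg, hodd.neg_pow, abs_neg] at this
    rw [Real.sign_of_neg hη]
    linarith
  · rw [Real.sign_zero, mul_zero]
    positivity
  · rw [Real.sign_of_pos hη, mul_one]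
    exact (neg_mul_pow_add_le hodd hc.le hca haC hη.le hP).trans hbound
end

section
/- Define on the space 𝒱 = {(u, r) ∈ (H¹(0,1))^m × ℝⁿ : u is continuous across vertices and Lu = r} the form 𝔞((u,r),(g,q)) = Σ_j ∫₀¹ μ_j c_j u_j' g_j' dx + Σ_j ∫₀¹ μ_j p_j u_j g_j dx − ⟨Mr, q⟩. If M satisfies: symmetric, nonnegative off-diagonal, and strictly diagonally dominant with negative row sums (b_{ii} + Σ_{k≠i} b_{ik} < 0), and c_j > 0, p_j ≥ 0, then 𝔞 is symmetric and accretive: 𝔞(U,U) ≥ 0 for all U ∈ 𝒱, with 𝔞(U,U) = 0 only for U = 0. -/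
open MeasureTheory

/-- The sesquilinear (here: bilinear, real) form of the network problem:
𝔞((u,r),(g,q)) = Σ_j ∫₀¹ μ_j c_j u_j' g_j' + Σ_j ∫₀¹ μ_j p_j u_j g_j − ⟨Mr,q⟩. -/
noncomputable def netForm (m n : ℕ) (μ : Fin m → ℝ) (c p : Fin m → ℝ → ℝ)
    (M : Matrix (Fin n) (Fin n) ℝ)
    (u : Fin m → ℝ → ℝ) (u' : Fin m → ℝ → ℝ) (r : Fin n → ℝ)
    (g : Fin m → ℝ → ℝ) (g' : Fin m → ℝ → ℝ) (q : Fin n → ℝ) : ℝ :=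
  (∑ j, ∫ x in (0:ℝ)..1, μ j * c j x * u' j x * g' j x)
    + (∑ j, ∫ x in (0:ℝ)..1, μ j * p j x * u j x * g j x)
    - ∑ i, (∑ l, M i l * r l) * q i

/-!
The two integral sums are weighted squared `L²` norms, of `u'` with the positive weight `μ c`
and of `u` with the nonnegative weight `μ p`. The vertex term is governed by the identity
`⟨Mr, r⟩ = ∑ᵢ (∑ₗ M i l) rᵢ² - ½ ∑ᵢ ∑ₗ M i l (rᵢ - rₗ)²` for symmetric `M`: nonnegative
off-diagonal entries and negative row sums make `⟨Mr, r⟩ < 0` for `r ≠ 0`. So `𝔞(U, U) ≥ 0`,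
and `𝔞(U, U) = 0` forces `r = 0` and `u' = 0`, whence each `u j` is constant, equal to its
vertex value `0`.
-/

open Finset Matrix Set

namespace Matrix

variable {ι : Type*} [Fintype ι] {M : Matrix ι ι ℝ}

theorem sum_rowSum_mul_sq_sub_mulVec_dotProduct_self (hM : M.IsSymm) (r : ι → ℝ) :
    ∑ i, (∑ l, M i l) * r i ^ 2 - (M *ᵥ r) ⬝ᵥ r = (∑ i, ∑ l, M i l * (r i - r l) ^ 2) / 2 := by
  have hswap : ∑ i, ∑ l, M i l * r l ^ 2 = ∑ i, ∑ l, M i l * r i ^ 2 := by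
    rw [Finset.sum_comm]; simp_rw [hM.apply]
  have hexp : ∑ i, ∑ l, M i l * (r i - r l) ^ 2 = ∑ i, ∑ l, M i l * r i ^ 2
      + ∑ i, ∑ l, M i l * r l ^ 2 - 2 * ∑ i, ∑ l, M i l * r l * r i := by
    simp only [mul_sum, ← sum_add_distrib, ← sum_sub_distrib]
    refine sum_congr rfl fun i _ => Finset.sum_congr rfl fun l _ => ?_
    ring
  rw [hexp, hswap]
  simp only [dotProduct, mulVec, sum_mul]
  ring

theorem mulVec_dotProduct_self_le_sum_rowSum_mul_sq (hM : M.IsSymm)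
    (hoff : ∀ i l, i ≠ l → 0 ≤ M i l) (r : ι → ℝ) :
    (M *ᵥ r) ⬝ᵥ r ≤ ∑ i, (∑ l, M i l) * r i ^ 2 := by
  have hterm : ∀ i l, 0 ≤ M i l * (r i - r l) ^ 2 := fun i l => by
    rcases eq_or_ne i l with rfl | hil
    · simp
    · exact mul_nonneg (hoff i l hil) (sq_nonneg _)
  have hid := sum_rowSum_mul_sq_sub_mulVec_dotProduct_self hM r
  have hsum : 0 ≤ ∑ i, ∑ l, M i l * (r i - r l) ^ 2 :=
    sum_nonneg fun i _ => sum_nonneg fun l _ => hterm i l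
  linarith

theorem mulVec_dotProduct_self_nonpos (hM : M.IsSymm) (hoff : ∀ i l, i ≠ l → 0 ≤ M i l)
    (hrow : ∀ i, ∑ l, M i l < 0) (r : ι → ℝ) : (M *ᵥ r) ⬝ᵥ r ≤ 0 :=
  (mulVec_dotProduct_self_le_sum_rowSum_mul_sq hM hoff r).trans <|
    sum_nonpos fun i _ => mul_nonpos_of_nonpos_of_nonneg (hrow i).le (sq_nonneg _)

theorem mulVec_dotProduct_self_neg (hM : M.IsSymm) (hoff : ∀ i l, i ≠ l → 0 ≤ M i l)
    (hrow : ∀ i, ∑ l, M i l < 0) {r : ι → ℝ} (hr : r ≠ 0) : (M *ᵥ r) ⬝ᵥ r < 0 := by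
  obtain ⟨k, hk⟩ := Function.ne_iff.mp hr
  refine (mulVec_dotProduct_self_le_sum_rowSum_mul_sq hM hoff r).trans_lt ?_
  refine sum_neg' (fun i _ => mul_nonpos_of_nonpos_of_nonneg (hrow i).le (sq_nonneg _))
    ⟨k, mem_univ k, mul_neg_of_neg_of_pos (hrow k) (pow_two_pos_of_ne_zero hk)⟩

end Matrix

theorem intervalIntegral.integral_mul_mul_self_nonneg {w f : ℝ → ℝ} {a b : ℝ} (hab : a ≤ b)
    (hw : ∀ x, 0 ≤ w x) : 0 ≤ ∫ x in a..b, w x * f x * f x :=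
  intervalIntegral.integral_nonneg hab fun x _ => by
    rw [mul_assoc]; exact mul_nonneg (hw x) (mul_self_nonneg _)

theorem eqOn_zero_of_integral_eq_zero {f : ℝ → ℝ} {a b : ℝ} (hab : a < b) (hf : Continuous f)
    (hf0 : ∀ x, 0 ≤ f x) (hI : ∫ x in a..b, f x = 0) : EqOn f 0 (Icc a b) := by
  have hae : f =ᵐ[volume.restrict (Ioc a b)] 0 :=
    (intervalIntegral.integral_eq_zero_iff_of_le_of_nonneg_ae hab.le
      (Filter.Eventually.of_forall hf0) (hf.intervalIntegrable a b)).mp hI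
  have hIoc : EqOn f 0 (Ioc a b) :=
    Measure.eqOn_Ioc_of_ae_eq volume hae hf.continuousOn continuousOn_const
  simpa [closure_Ioc hab.ne] using hIoc.closure hf continuous_const

theorem eqOn_zero_of_integral_mul_mul_self_eq_zero {w f : ℝ → ℝ} {a b : ℝ} (hab : a < b)
    (hw : Continuous w) (hw0 : ∀ x, 0 < w x) (hf : Continuous f)
    (hI : ∫ x in a..b, w x * f x * f x = 0) : EqOn f 0 (Icc a b) := by
  intro x hx
  have := eqOn_zero_of_integral_eq_zero hab (by fun_prop)
    (fun x => by rw [mul_assoc]; exact mul_nonneg (hw0 x).le (mul_self_nonneg _)) hI hx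
  simpa [mul_assoc, (hw0 x).ne'] using this

theorem netForm_self {m n : ℕ} (μ : Fin m → ℝ) (c p : Fin m → ℝ → ℝ)
    (M : Matrix (Fin n) (Fin n) ℝ) (u u' : Fin m → ℝ → ℝ) (r : Fin n → ℝ) :
    netForm m n μ c p M u u' r u u' r = (∑ j, ∫ x in (0:ℝ)..1, μ j * c j x * u' j x * u' j x)
      + (∑ j, ∫ x in (0:ℝ)..1, μ j * p j x * u j x * u j x) - (M *ᵥ r) ⬝ᵥ r :=
  rfl

theorem netForm_comm {m n : ℕ} {μ : Fin m → ℝ} {c p : Fin m → ℝ → ℝ}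
    {M : Matrix (Fin n) (Fin n) ℝ} (hM : M.IsSymm) (u u' : Fin m → ℝ → ℝ) (r : Fin n → ℝ)
    (g g' : Fin m → ℝ → ℝ) (q : Fin n → ℝ) :
    netForm m n μ c p M u u' r g g' q = netForm m n μ c p M g g' q u u' r := by
  unfold netForm
  congr 1
  · congr 1 <;>
      refine sum_congr rfl fun j _ => intervalIntegral.integral_congr fun x _ => ?_ <;> ring
  · show (M *ᵥ r) ⬝ᵥ q = (M *ᵥ q) ⬝ᵥ r
    rw [dotProduct_comm, dotProduct_mulVec, ← mulVec_transpose, hM.eq]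

theorem stmt_13_general (m n : ℕ) (e0 e1 : Fin m → Fin n)
    (μ : Fin m → ℝ) (hμ : ∀ j, 0 < μ j)
    (c p : Fin m → ℝ → ℝ)
    (hcc : ∀ j, Continuous (c j)) (hcpos : ∀ j x, 0 < c j x)
    (hppos : ∀ j x, 0 ≤ p j x)
    (M : Matrix (Fin n) (Fin n) ℝ) (hMsym : M.IsSymm)
    (hMoff : ∀ i l, i ≠ l → 0 ≤ M i l)
    (hMrow : ∀ i, M i i + ∑ l ∈ Finset.univ.filter (fun l => l ≠ i), M i l < 0) :
    ∀ (u : Fin m → ℝ → ℝ) (u' : Fin m → ℝ → ℝ) (r : Fin n → ℝ),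
      (∀ j x, HasDerivAt (u j) (u' j x) x) → (∀ j, Continuous (u' j)) →
      (∀ j, u j 0 = r (e0 j) ∧ u j 1 = r (e1 j)) →
      (∀ (g : Fin m → ℝ → ℝ) (g' : Fin m → ℝ → ℝ) (q : Fin n → ℝ),
        (∀ j x, HasDerivAt (g j) (g' j x) x) → (∀ j, Continuous (g' j)) →
        (∀ j, g j 0 = q (e0 j) ∧ g j 1 = q (e1 j)) →
        netForm m n μ c p M u u' r g g' q = netForm m n μ c p M g g' q u u' r) ∧
      0 ≤ netForm m n μ c p M u u' r u u' r ∧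
      (netForm m n μ c p M u u' r u u' r = 0 →
        (∀ j, ∀ x ∈ Set.Icc (0:ℝ) 1, u j x = 0) ∧ r = 0) := by
  intro u u' r hu hu' hbc
  have hrow : ∀ i, ∑ l, M i l < 0 := fun i => by
    simpa only [filter_ne', add_sum_erase _ _ (mem_univ i)] using hMrow i
  have hkin : ∀ j, 0 ≤ ∫ x in (0:ℝ)..1, μ j * c j x * u' j x * u' j x := fun j =>
    intervalIntegral.integral_mul_mul_self_nonneg zero_le_one fun x =>
      (mul_pos (hμ j) (hcpos j x)).le
  have hpot : ∀ j, 0 ≤ ∫ x in (0:ℝ)..1, μ j * p j x * u j x * u j x := fun j =>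
    intervalIntegral.integral_mul_mul_self_nonneg zero_le_one fun x =>
      mul_nonneg (hμ j).le (hppos j x)
  have hK := sum_nonneg fun j (_ : j ∈ Finset.univ) => hkin j
  have hP := sum_nonneg fun j (_ : j ∈ Finset.univ) => hpot j
  have hvert : (M *ᵥ r) ⬝ᵥ r ≤ 0 := mulVec_dotProduct_self_nonpos hMsym hMoff hrow r
  refine ⟨fun g g' q _ _ _ => netForm_comm hMsym u u' r g g' q, ?_, fun h0 => ?_⟩
  · rw [netForm_self]
    linarith
  rw [netForm_self] at h0
  have hkin0 : ∑ j, ∫ x in (0:ℝ)..1, μ j * c j x * u' j x * u' j x = 0 := by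
    linarith
  have hr : r = 0 := by
    by_contra hr
    have := mulVec_dotProduct_self_neg hMsym hMoff hrow hr
    linarith
  refine ⟨fun j x hx => ?_, hr⟩
  have hu'0 : EqOn (u' j) 0 (Icc 0 1) :=
    eqOn_zero_of_integral_mul_mul_self_eq_zero zero_lt_one (by fun_prop)
      (fun x => mul_pos (hμ j) (hcpos j x)) (hu' j)
      ((sum_eq_zero_iff_of_nonneg fun j _ => hkin j).mp hkin0 j (mem_univ j))
  have hconst := constant_of_has_deriv_right_zero
    (HasDerivAt.continuousOn fun t _ => hu j t)
    (fun t ht => by simpa [hu'0 (Ico_subset_Icc_self ht)] using (hu j t).hasDerivWithinAt) x hx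
  rw [hconst, (hbc j).1, hr, Pi.zero_apply]

/-- The form 𝔞 on the network, with M symmetric, nonnegative off-diagonal, negative
row sums, c_j > 0, p_j ≥ 0, is symmetric and accretive; 𝔞(U,U) = 0 only for U = 0.
Membership (u,r) ∈ 𝒱 is encoded by: u_j ∈ C¹, with endpoint values given by r at
the vertices e0 j, e1 j of the edge j (continuity across the vertices). -/
theorem stmt_13 (m n : ℕ) (e0 e1 : Fin m → Fin n)
    (μ : Fin m → ℝ) (hμ : ∀ j, 0 < μ j)
    (c p : Fin m → ℝ → ℝ)
    (hcc : ∀ j, Continuous (c j)) (hcpos : ∀ j x, 0 < c j x)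
    (hpc : ∀ j, Continuous (p j)) (hppos : ∀ j x, 0 ≤ p j x)
    (M : Matrix (Fin n) (Fin n) ℝ) (hMsym : M.IsSymm)
    (hMoff : ∀ i l, i ≠ l → 0 ≤ M i l)
    (hMrow : ∀ i, M i i + ∑ l ∈ Finset.univ.filter (fun l => l ≠ i), M i l < 0) :
    ∀ (u : Fin m → ℝ → ℝ) (u' : Fin m → ℝ → ℝ) (r : Fin n → ℝ),
      (∀ j x, HasDerivAt (u j) (u' j x) x) → (∀ j, Continuous (u' j)) →
      (∀ j, u j 0 = r (e0 j) ∧ u j 1 = r (e1 j)) →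
      (∀ (g : Fin m → ℝ → ℝ) (g' : Fin m → ℝ → ℝ) (q : Fin n → ℝ),
        (∀ j x, HasDerivAt (g j) (g' j x) x) → (∀ j, Continuous (g' j)) →
        (∀ j, g j 0 = q (e0 j) ∧ g j 1 = q (e1 j)) →
        netForm m n μ c p M u u' r g g' q = netForm m n μ c p M g g' q u u' r) ∧
      0 ≤ netForm m n μ c p M u u' r u u' r ∧
      (netForm m n μ c p M u u' r u u' r = 0 →
        (∀ j, ∀ x ∈ Set.Icc (0:ℝ) 1, u j x = 0) ∧ r = 0) :=
  stmt_13_general m n e0 e1 μ hμ c p hcc hcpos hppos M hMsym hMoff hMrow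
end
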